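/- Let θ ∈ (0, π) and φ = arctan(1/sin θ). Then at ψ₁ = π/2 − φ and ψ₂ = π/2 + φ the CHSH success probability attains its maximum: P(θ, π/2 − φ, π/2 + φ) = 1/2 + √(1 + sin²θ)/4 = sup over all real ψ₁, ψ₂ of P(θ, ψ₁, ψ₂). -/

import Mathlib

/-!
By Cauchy–Schwarz, `s sin ψ + c cos ψ ≤ √(s² + c²)`; applying this to `ψ₁` with `(s, c) = (sin θ, 1)`
and to `ψ₂` with `(sin θ, -1)` gives `P ≤ 1/2 + √(1 + sin²θ)/4`. Since `sin θ > 0`,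
`π/2 - arctan (1 / sin θ) = arctan (sin θ)`, so the proposed angles are `arctan (sin θ)` and
`π - arctan (sin θ)`, the angles at which both Cauchy–Schwarz bounds are equalities.
-/

/-- The CHSH success probability of the target state for angle `θ` and
measurement angles `ψ₁, ψ₂`. -/
noncomputable def chshP (θ ψ₁ ψ₂ : ℝ) : ℝ :=
  1 / 2 + (1 / 8) * (Real.sin θ * (Real.sin ψ₁ + Real.sin ψ₂)
    + Real.cos ψ₁ - Real.cos ψ₂)

open Real

namespace Real

theorem mul_sin_add_mul_cos_le_sqrt (a b x : ℝ) : a * sin x + b * cos x ≤ √(a ^ 2 + b ^ 2) := by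
  apply le_sqrt_of_sq_le
  nlinarith [sin_sq_add_cos_sq x, sq_nonneg (a * cos x - b * sin x)]

theorem mul_sin_arctan_add_cos_arctan (a : ℝ) : a * sin (arctan a) + cos (arctan a) = √(1 + a ^ 2) := by
  have hpos : 0 < √(1 + a ^ 2) := sqrt_pos.mpr (by positivity)
  rw [sin_arctan, cos_arctan]
  field_simp
  rw [sq_sqrt (by positivity)]
  ring

end Real

theorem ciSup_ciSup_eq_of_forall_le {α β γ : Type*} [ConditionallyCompleteLattice γ]
    {f : α → β → γ} {M : γ} (hle : ∀ a b, f a b ≤ M) (a₀ : α) (b₀ : β) (hM : f a₀ b₀ = M) :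
    ⨆ a, ⨆ b, f a b = M := by
  have : Nonempty α := ⟨a₀⟩
  have : Nonempty β := ⟨b₀⟩
  have hrow : ∀ a, ⨆ b, f a b ≤ M := fun a => ciSup_le (hle a)
  refine le_antisymm (ciSup_le hrow) ?_
  calc M = f a₀ b₀ := hM.symm
    _ ≤ ⨆ b, f a₀ b := le_ciSup ⟨M, Set.forall_mem_range.mpr (hle a₀)⟩ b₀
    _ ≤ ⨆ a, ⨆ b, f a b := le_ciSup ⟨M, Set.forall_mem_range.mpr hrow⟩ a₀

theorem chshP_le (θ ψ₁ ψ₂ : ℝ) : chshP θ ψ₁ ψ₂ ≤ 1 / 2 + √(1 + sin θ ^ 2) / 4 := by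
  have h₁ := mul_sin_add_mul_cos_le_sqrt (sin θ) 1 ψ₁
  have h₂ := mul_sin_add_mul_cos_le_sqrt (sin θ) (-1) ψ₂
  rw [show sin θ ^ 2 + 1 ^ 2 = 1 + sin θ ^ 2 by ring] at h₁
  rw [show sin θ ^ 2 + (-1) ^ 2 = 1 + sin θ ^ 2 by ring] at h₂
  unfold chshP
  linarith

theorem chshP_arctan_sin (θ : ℝ) :
    chshP θ (arctan (sin θ)) (π - arctan (sin θ)) = 1 / 2 + √(1 + sin θ ^ 2) / 4 := by
  have h := mul_sin_arctan_add_cos_arctan (sin θ)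
  unfold chshP
  rw [sin_pi_sub, cos_pi_sub]
  linarith

theorem stmt_2 (θ : ℝ) (hθ : θ ∈ Set.Ioo 0 Real.pi)
    (φ : ℝ) (hφ : φ = Real.arctan (1 / Real.sin θ)) :
    chshP θ (Real.pi / 2 - φ) (Real.pi / 2 + φ)
        = 1 / 2 + Real.sqrt (1 + Real.sin θ ^ 2) / 4 ∧
    IsGreatest {x : ℝ | ∃ ψ₁ ψ₂ : ℝ, x = chshP θ ψ₁ ψ₂}
        (1 / 2 + Real.sqrt (1 + Real.sin θ ^ 2) / 4) ∧
    1 / 2 + Real.sqrt (1 + Real.sin θ ^ 2) / 4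
        = ⨆ ψ₁ : ℝ, ⨆ ψ₂ : ℝ, chshP θ ψ₁ ψ₂ := by
  have hsin : 0 < sin θ := sin_pos_of_pos_of_lt_pi hθ.1 hθ.2
  have hφ' : φ = π / 2 - arctan (sin θ) := by rw [hφ, one_div, arctan_inv_of_pos hsin]
  have hval : chshP θ (π / 2 - φ) (π / 2 + φ) = 1 / 2 + √(1 + sin θ ^ 2) / 4 := by
    rw [hφ', sub_sub_cancel, show π / 2 + (π / 2 - arctan (sin θ)) = π - arctan (sin θ) by ring]
    exact chshP_arctan_sin θ
  refine ⟨hval, ⟨⟨_, _, hval.symm⟩, ?_⟩, ?_⟩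
  · rintro x ⟨ψ₁, ψ₂, rfl⟩
    exact chshP_le θ ψ₁ ψ₂
  · exact (ciSup_ciSup_eq_of_forall_le (chshP_le θ) _ _ hval).symm
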